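/- Bubble integral identity: for n ≥ 1 and 0 < γ < n/2, ∫_{ℝⁿ} (1/|x-y|^{2γ}) (1/(1+|y|²))^{n-γ} dy = I(γ) (1/(1+|x|²))^{γ} for every x ∈ ℝⁿ, where I(γ) = π^{n/2} Γ((n-2γ)/2)/Γ(n-γ). -/

import Mathlib

/-!
Both factors of the integrand are Gamma integrals; scaling the parameter of the first by that of
the second (Schwinger parametrisation) gives, with `A = |x - y|²` and `B = 1 + |y|²`,
`Γ(γ) Γ(n - γ) A^{-γ} B^{-(n-γ)} = ∫∫ t^{n-1} s^{γ-1} e^{-t (s A + B)} ds dt`.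
The `y`-integral is then Gaussian, the `t`-integral a Gamma integral, and what is left is the
Beta integral `∫ s^{γ-1} (1 + (1 + |x|²) s)^{-n/2} ds = Γ(γ) Γ(n/2 - γ) / Γ(n/2) (1 + |x|²)^{-γ}`.
All integrands are nonnegative, so everything is computed with lower Lebesgue integrals and
Tonelli justifies each interchange.
-/

open MeasureTheory Real

/-- `I(γ) := π^{n/2} Γ((n-2γ)/2)/Γ(n-γ)` for `0 < γ < n/2`. -/
noncomputable def bubbleI (n : ℕ) (γ : ℝ) : ℝ :=
  Real.pi ^ ((n : ℝ) / 2) * Real.Gamma (((n : ℝ) - 2 * γ) / 2) / Real.Gamma ((n : ℝ) - γ)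

theorem bubbleI_eq (n : ℕ) (γ : ℝ) :
    bubbleI n γ = π ^ ((n : ℝ) / 2) * Gamma ((n : ℝ) / 2 - γ) / Gamma ((n : ℝ) - γ) := by
  rw [bubbleI, sub_div, mul_div_cancel_left₀ γ two_ne_zero]

open Set

section OfReal

variable {α : Type*} [MeasurableSpace α] {μ : Measure α}

theorem lintegral_ofReal_of_integral_eq {f : α → ℝ} {c : ℝ} (hf : 0 ≤ᵐ[μ] f)
    (h : ∫ a, f a ∂μ = c) (hc : c ≠ 0) :
    ∫⁻ a, ENNReal.ofReal (f a) ∂μ = ENNReal.ofReal c := by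
  rw [← ofReal_integral_eq_lintegral_ofReal (.of_integral_ne_zero (h ▸ hc)) hf, h]

theorem lintegral_ofReal_const_mul {c : ℝ} (hc : 0 ≤ c) (f : α → ℝ) :
    ∫⁻ a, ENNReal.ofReal (c * f a) ∂μ = ENNReal.ofReal c * ∫⁻ a, ENNReal.ofReal (f a) ∂μ := by
  simp_rw [ENNReal.ofReal_mul hc]
  exact lintegral_const_mul' _ _ ENNReal.ofReal_ne_top

end OfReal

theorem one_div_sq_rpow {u : ℝ} (hu : 0 ≤ u) (γ : ℝ) : (1 / u ^ 2) ^ γ = 1 / u ^ (2 * γ) := by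
  rw [div_rpow zero_le_one (by positivity), one_rpow, ← rpow_natCast, ← rpow_mul hu]
  norm_num

theorem lintegral_rpow_mul_exp_neg_mul_Ioi {a r : ℝ} (ha : 0 < a) (hr : 0 < r) :
    ∫⁻ t in Ioi 0, ENNReal.ofReal (t ^ (a - 1) * exp (-(r * t))) =
      ENNReal.ofReal ((1 / r) ^ a * Gamma a) :=
  lintegral_ofReal_of_integral_eq
    ((ae_restrict_mem measurableSet_Ioi).mono fun t ht =>
      mul_nonneg (rpow_nonneg (le_of_lt ht) _) (exp_pos _).le)
    (integral_rpow_mul_exp_neg_mul_Ioi ha hr) (mul_pos (by positivity) (Gamma_pos_of_pos ha)).ne'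

theorem lintegral_lintegral_schwinger {A B α β : ℝ} (hA : 0 < A) (hB : 0 < B) (hα : 0 < α)
    (hβ : 0 < β) :
    ∫⁻ t in Ioi 0, ∫⁻ s in Ioi 0,
        ENNReal.ofReal (t ^ (α + β - 1) * s ^ (α - 1) * exp (-(t * (s * A + B)))) =
      ENNReal.ofReal (Gamma α * Gamma β * (1 / A) ^ α * (1 / B) ^ β) := by
  have inner : ∀ t ∈ Ioi (0 : ℝ), ∫⁻ s in Ioi 0,
      ENNReal.ofReal (t ^ (α + β - 1) * s ^ (α - 1) * exp (-(t * (s * A + B)))) =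
        ENNReal.ofReal (Gamma α * (1 / A) ^ α * (t ^ (β - 1) * exp (-(B * t)))) := by
    intro t (ht : 0 < t)
    have hsplit : ∀ s, t ^ (α + β - 1) * s ^ (α - 1) * exp (-(t * (s * A + B))) =
        t ^ (α + β - 1) * exp (-(B * t)) * (s ^ (α - 1) * exp (-(t * A * s))) := fun s => by
      rw [show -(t * (s * A + B)) = -(B * t) + -(t * A * s) by ring, exp_add]; ring
    have hpow : t ^ (α + β - 1) * (1 / (t * A)) ^ α = (1 / A) ^ α * t ^ (β - 1) := by
      have htt : t ^ (α + β - 1) * t ^ (-α) = t ^ (β - 1) := by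
        rw [← rpow_add ht]; ring_nf
      rw [one_div, mul_inv, mul_rpow (by positivity) (by positivity), inv_rpow ht.le,
        ← rpow_neg ht.le, ← one_div, ← mul_assoc, htt, mul_comm]
    simp_rw [hsplit]
    rw [lintegral_ofReal_const_mul (by positivity),
      lintegral_rpow_mul_exp_neg_mul_Ioi hα (by positivity), ← ENNReal.ofReal_mul (by positivity)]
    congr 1
    linear_combination (Gamma α * exp (-(B * t))) * hpow
  rw [setLIntegral_congr_fun measurableSet_Ioi inner, lintegral_ofReal_const_mul (by positivity),
    lintegral_rpow_mul_exp_neg_mul_Ioi hβ hB, ← ENNReal.ofReal_mul (by positivity)]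
  congr 1; ring

theorem lintegral_rpow_mul_one_div_one_add_mul_rpow {a b c : ℝ} (ha : 0 < a) (hb : 0 < b)
    (hc : 0 < c) :
    ∫⁻ s in Ioi 0, ENNReal.ofReal (s ^ (a - 1) * (1 / (1 + c * s)) ^ (a + b)) =
      ENNReal.ofReal (Gamma a * Gamma b / Gamma (a + b) * (1 / c) ^ a) := by
  have hΓ : 0 < Gamma (a + b) := Gamma_pos_of_pos (by positivity)
  have key : ENNReal.ofReal (Gamma (a + b)) *
      ∫⁻ s in Ioi 0, ENNReal.ofReal (s ^ (a - 1) * (1 / (1 + c * s)) ^ (a + b)) =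
        ENNReal.ofReal (Gamma (a + b)) *
          ENNReal.ofReal (Gamma a * Gamma b / Gamma (a + b) * (1 / c) ^ a) := by
    calc _ = ∫⁻ s in Ioi 0, ∫⁻ t in Ioi 0,
          ENNReal.ofReal (t ^ (a + b - 1) * s ^ (a - 1) * exp (-(t * (s * c + 1)))) := by
          rw [← lintegral_const_mul' _ _ ENNReal.ofReal_ne_top]
          refine setLIntegral_congr_fun measurableSet_Ioi fun s (hs : 0 < s) => ?_
          rw [← ENNReal.ofReal_mul hΓ.le, show Gamma (a + b) * (s ^ (a - 1) *
              (1 / (1 + c * s)) ^ (a + b)) = s ^ (a - 1) * ((1 / (1 + c * s)) ^ (a + b) *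
              Gamma (a + b)) by ring, ENNReal.ofReal_mul (by positivity),
            ← lintegral_rpow_mul_exp_neg_mul_Ioi (by positivity)
              (by positivity), ← lintegral_ofReal_const_mul (by positivity)]
          congr 1 with t
          rw [show (1 + c * s) * t = t * (s * c + 1) by ring, mul_left_comm, mul_assoc]
      _ = ∫⁻ t in Ioi 0, ∫⁻ s in Ioi 0,
          ENNReal.ofReal (t ^ (a + b - 1) * s ^ (a - 1) * exp (-(t * (s * c + 1)))) :=
          lintegral_lintegral_swap (Measurable.aemeasurable (by fun_prop))
      _ = _ := by
          rw [lintegral_lintegral_schwinger hc one_pos ha hb, ← ENNReal.ofReal_mul hΓ.le,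
            one_div_one, one_rpow, mul_one]
          congr 1
          field_simp
  exact (ENNReal.mul_right_inj (by simpa using hΓ) ENNReal.ofReal_ne_top).1 key

-- The integrand left after integrating out `y` by
-- `lintegral_exp_neg_mul_norm_sub_sq_add_mul_norm_sq` with `a = t s`, `b = t`.
theorem lintegral_lintegral_bubble_kernel {d γ r : ℝ} (hγ : 0 < γ) (hγd : 2 * γ < d)
    (hr : 0 ≤ r) :
    ∫⁻ t in Ioi 0, ∫⁻ s in Ioi 0, ENNReal.ofReal (t ^ (d - 1) * s ^ (γ - 1) * (exp (-t) *
        ((π / (t * s + t)) ^ (d / 2) * exp (-(t * s * t / (t * s + t) * r))))) =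
      ENNReal.ofReal (π ^ (d / 2) * Gamma γ * Gamma (d / 2 - γ) * (1 / (1 + r)) ^ γ) := by
  have hd : 0 < d / 2 := by linarith
  have hβ : 0 < d / 2 - γ := by linarith
  have hkernel : ∀ s ∈ Ioi (0 : ℝ), ∀ t ∈ Ioi (0 : ℝ),
      t ^ (d - 1) * s ^ (γ - 1) * (exp (-t) *
        ((π / (t * s + t)) ^ (d / 2) * exp (-(t * s * t / (t * s + t) * r)))) =
      π ^ (d / 2) * s ^ (γ - 1) * (1 / (1 + s)) ^ (d / 2) *
        (t ^ (d / 2 - 1) * exp (-((1 + s * r / (1 + s)) * t))) := by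
    intro s (hs : 0 < s) t (ht : 0 < t)
    have hpow : t ^ (d - 1) * (π / (t * s + t)) ^ (d / 2) =
        π ^ (d / 2) * (1 / (1 + s)) ^ (d / 2) * t ^ (d / 2 - 1) := by
      rw [show π / (t * s + t) = π * (1 / (1 + s)) * t⁻¹ by field_simp; ring,
        mul_rpow (by positivity) (by positivity), mul_rpow pi_pos.le (by positivity),
        inv_rpow ht.le, ← rpow_neg ht.le, mul_comm, mul_assoc, ← rpow_add ht]
      ring_nf
    have hexp : exp (-t) * exp (-(t * s * t / (t * s + t) * r)) =
        exp (-((1 + s * r / (1 + s)) * t)) := by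
      rw [← exp_add]; congr 1; field_simp; ring
    linear_combination (s ^ (γ - 1) * exp (-t) * exp (-(t * s * t / (t * s + t) * r))) * hpow +
      (π ^ (d / 2) * s ^ (γ - 1) * (1 / (1 + s)) ^ (d / 2) * t ^ (d / 2 - 1)) * hexp
  have hinner : ∀ s ∈ Ioi (0 : ℝ), ∫⁻ t in Ioi 0, ENNReal.ofReal
      (π ^ (d / 2) * s ^ (γ - 1) * (1 / (1 + s)) ^ (d / 2) *
        (t ^ (d / 2 - 1) * exp (-((1 + s * r / (1 + s)) * t)))) =
      ENNReal.ofReal (π ^ (d / 2) * Gamma (d / 2) *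
        (s ^ (γ - 1) * (1 / (1 + (1 + r) * s)) ^ (γ + (d / 2 - γ)))) := by
    intro s (hs : 0 < s)
    have hden : (1 / (1 + s)) * (1 / (1 + s * r / (1 + s))) = 1 / (1 + (1 + r) * s) := by
      field_simp; ring
    rw [lintegral_ofReal_const_mul (by positivity),
      lintegral_rpow_mul_exp_neg_mul_Ioi hd (by positivity), ← ENNReal.ofReal_mul (by positivity),
      add_sub_cancel, ← hden, mul_rpow (by positivity) (by positivity)]
    congr 1
    ring
  calc _ = ∫⁻ s in Ioi 0, ∫⁻ t in Ioi 0, ENNReal.ofReal (t ^ (d - 1) * s ^ (γ - 1) * (exp (-t) *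
        ((π / (t * s + t)) ^ (d / 2) * exp (-(t * s * t / (t * s + t) * r))))) :=
        lintegral_lintegral_swap (Measurable.aemeasurable (by fun_prop))
    _ = ∫⁻ s in Ioi 0, ENNReal.ofReal (π ^ (d / 2) * Gamma (d / 2) *
        (s ^ (γ - 1) * (1 / (1 + (1 + r) * s)) ^ (γ + (d / 2 - γ)))) := by
        refine setLIntegral_congr_fun measurableSet_Ioi fun s hs => ?_
        rw [← hinner s hs]
        exact setLIntegral_congr_fun measurableSet_Ioi fun t ht => by rw [hkernel s hs t ht]
    _ = _ := by
        rw [lintegral_ofReal_const_mul (by positivity),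
          lintegral_rpow_mul_one_div_one_add_mul_rpow hγ hβ (by positivity),
          ← ENNReal.ofReal_mul (by positivity), add_sub_cancel]
        congr 1
        field_simp

section Schwinger

variable {E : Type*} [NormedAddCommGroup E] [MeasurableSpace E] [BorelSpace E]
  {μ : Measure E} [SFinite μ] [NullSingletonClass μ]

theorem lintegral_bubble_eq_lintegral_schwinger {d γ : ℝ} (hγ : 0 < γ) (hγd : γ < d) (x : E) :
    ENNReal.ofReal (Gamma γ * Gamma (d - γ)) *
        ∫⁻ y, ENNReal.ofReal ((1 / ‖x - y‖ ^ (2 * γ)) * (1 / (1 + ‖y‖ ^ 2)) ^ (d - γ)) ∂μ =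
      ∫⁻ t in Ioi 0, ∫⁻ s in Ioi 0, ∫⁻ y, ENNReal.ofReal
        (t ^ (d - 1) * s ^ (γ - 1) * exp (-(t * (s * ‖x - y‖ ^ 2 + (1 + ‖y‖ ^ 2))))) ∂μ := by
  have hdγ : 0 < d - γ := by linarith
  have hΓ : 0 < Gamma γ * Gamma (d - γ) := mul_pos (Gamma_pos_of_pos hγ) (Gamma_pos_of_pos hdγ)
  have hschwinger : ∀ᵐ y ∂μ, ENNReal.ofReal (Gamma γ * Gamma (d - γ)) *
      ENNReal.ofReal ((1 / ‖x - y‖ ^ (2 * γ)) * (1 / (1 + ‖y‖ ^ 2)) ^ (d - γ)) =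
      ∫⁻ t in Ioi 0, ∫⁻ s in Ioi 0, ENNReal.ofReal
        (t ^ (d - 1) * s ^ (γ - 1) * exp (-(t * (s * ‖x - y‖ ^ 2 + (1 + ‖y‖ ^ 2))))) := by
    filter_upwards [compl_mem_ae_iff.mpr (measure_singleton x)] with y (hy : y ≠ x)
    have hxy : 0 < ‖x - y‖ := norm_pos_iff.2 (sub_ne_zero.2 hy.symm)
    rw [← ENNReal.ofReal_mul hΓ.le, ← one_div_sq_rpow hxy.le, show d - 1 = γ + (d - γ) - 1 by ring,
      lintegral_lintegral_schwinger (by positivity) (by positivity) hγ hdγ]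
    congr 1
    ring
  rw [← lintegral_const_mul' _ _ ENNReal.ofReal_ne_top, lintegral_congr_ae hschwinger,
    lintegral_lintegral_swap (Measurable.aemeasurable
      (Measurable.lintegral_prod_right' (f := fun p : (E × ℝ) × ℝ => ENNReal.ofReal
        (p.1.2 ^ (d - 1) * p.2 ^ (γ - 1) *
          exp (-(p.1.2 * (p.2 * ‖x - p.1.1‖ ^ 2 + (1 + ‖p.1.1‖ ^ 2)))))) (by fun_prop)))]
  exact lintegral_congr fun t => lintegral_lintegral_swap (Measurable.aemeasurable (by fun_prop))

end Schwinger

section InnerProductSpace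

variable {E : Type*} [NormedAddCommGroup E] [InnerProductSpace ℝ E]

theorem mul_norm_sub_sq_add_mul_norm_sq (x y : E) {a b : ℝ} (hab : a + b ≠ 0) :
    a * ‖x - y‖ ^ 2 + b * ‖y‖ ^ 2 =
      (a + b) * ‖y - (a / (a + b)) • x‖ ^ 2 + a * b / (a + b) * ‖x‖ ^ 2 := by
  rw [norm_sub_sq_real, norm_sub_sq_real, real_inner_smul_right, norm_smul, real_inner_comm]
  simp only [Real.norm_eq_abs, mul_pow, sq_abs]
  field_simp
  ring

variable [FiniteDimensional ℝ E] [MeasurableSpace E] [BorelSpace E]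

theorem lintegral_exp_neg_mul_norm_sub_sq_add_mul_norm_sq (x : E) {a b : ℝ} (ha : 0 < a)
    (hb : 0 < b) :
    ∫⁻ y, ENNReal.ofReal (exp (-(a * ‖x - y‖ ^ 2 + b * ‖y‖ ^ 2))) =
      ENNReal.ofReal ((π / (a + b)) ^ ((Module.finrank ℝ E : ℝ) / 2) *
        exp (-(a * b / (a + b) * ‖x‖ ^ 2))) := by
  have hab : 0 < a + b := by positivity
  have hsplit : ∀ y : E, exp (-(a * ‖x - y‖ ^ 2 + b * ‖y‖ ^ 2)) =
      exp (-(a * b / (a + b) * ‖x‖ ^ 2)) * exp (-(a + b) * ‖y - (a / (a + b)) • x‖ ^ 2) := by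
    intro y
    rw [mul_norm_sub_sq_add_mul_norm_sq x y hab.ne', ← exp_add]
    ring_nf
  simp_rw [hsplit]
  rw [lintegral_ofReal_const_mul (exp_pos _).le,
    lintegral_sub_right_eq_self (fun y => ENNReal.ofReal (exp (-(a + b) * ‖y‖ ^ 2))),
    lintegral_ofReal_of_integral_eq (ae_of_all _ fun y => (exp_pos _).le)
      (GaussianFourier.integral_rexp_neg_mul_sq_norm hab) (by positivity),
    ← ENNReal.ofReal_mul (exp_pos _).le, mul_comm]

theorem lintegral_exp_neg_schwinger_exponent (x : E) {t s : ℝ} (ht : 0 < t) (hs : 0 < s) :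
    ∫⁻ y, ENNReal.ofReal (exp (-(t * (s * ‖x - y‖ ^ 2 + (1 + ‖y‖ ^ 2))))) =
      ENNReal.ofReal (exp (-t) * ((π / (t * s + t)) ^ ((Module.finrank ℝ E : ℝ) / 2) *
        exp (-(t * s * t / (t * s + t) * ‖x‖ ^ 2)))) := by
  have hsplit : ∀ y : E, exp (-(t * (s * ‖x - y‖ ^ 2 + (1 + ‖y‖ ^ 2)))) =
      exp (-t) * exp (-(t * s * ‖x - y‖ ^ 2 + t * ‖y‖ ^ 2)) := fun y => by
    rw [← exp_add]; ring_nf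
  simp_rw [hsplit]
  rw [lintegral_ofReal_const_mul (exp_pos _).le,
    lintegral_exp_neg_mul_norm_sub_sq_add_mul_norm_sq x (by positivity) ht,
    ← ENNReal.ofReal_mul (exp_pos _).le]

theorem lintegral_bubble {γ : ℝ} (hγ : 0 < γ) (hγd : 2 * γ < Module.finrank ℝ E) (x : E) :
    ∫⁻ y, ENNReal.ofReal ((1 / ‖x - y‖ ^ (2 * γ)) *
        (1 / (1 + ‖y‖ ^ 2)) ^ ((Module.finrank ℝ E : ℝ) - γ)) =
      ENNReal.ofReal (bubbleI (Module.finrank ℝ E) γ * (1 / (1 + ‖x‖ ^ 2)) ^ γ) := by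
  rw [bubbleI_eq]
  set d : ℝ := (Module.finrank ℝ E : ℝ)
  have : Nontrivial E := Module.finrank_pos_iff.mp (Nat.cast_pos.mp (by linarith : 0 < d))
  have hΓdγ : 0 < Gamma (d - γ) := Gamma_pos_of_pos (by linarith)
  have hΓ : 0 < Gamma γ * Gamma (d - γ) := mul_pos (Gamma_pos_of_pos hγ) hΓdγ
  refine (ENNReal.mul_right_inj (by simpa using hΓ) ENNReal.ofReal_ne_top).1 ?_
  rw [lintegral_bubble_eq_lintegral_schwinger hγ (by linarith) x]
  calc _ = ∫⁻ t in Ioi 0, ∫⁻ s in Ioi 0, ENNReal.ofReal (t ^ (d - 1) * s ^ (γ - 1) * (exp (-t) *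
        ((π / (t * s + t)) ^ (d / 2) * exp (-(t * s * t / (t * s + t) * ‖x‖ ^ 2))))) := by
        refine setLIntegral_congr_fun measurableSet_Ioi fun t (ht : 0 < t) =>
          setLIntegral_congr_fun measurableSet_Ioi fun s (hs : 0 < s) => ?_
        rw [lintegral_ofReal_const_mul (by positivity),
          lintegral_exp_neg_schwinger_exponent x ht hs, ← ENNReal.ofReal_mul (by positivity)]
    _ = _ := by
        rw [lintegral_lintegral_bubble_kernel hγ hγd (by positivity), ← ENNReal.ofReal_mul hΓ.le]
        congr 1
        field_simp [hΓdγ.ne']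

theorem integral_bubble {γ : ℝ} (hγ : 0 < γ) (hγd : 2 * γ < Module.finrank ℝ E) (x : E) :
    ∫ y, (1 / ‖x - y‖ ^ (2 * γ)) * (1 / (1 + ‖y‖ ^ 2)) ^ ((Module.finrank ℝ E : ℝ) - γ) =
      bubbleI (Module.finrank ℝ E) γ * (1 / (1 + ‖x‖ ^ 2)) ^ γ := by
  have hI : 0 < bubbleI (Module.finrank ℝ E) γ := by
    rw [bubbleI_eq]
    exact div_pos (mul_pos (by positivity) (Gamma_pos_of_pos (by linarith)))
      (Gamma_pos_of_pos (by linarith))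
  rw [integral_eq_lintegral_of_nonneg_ae (ae_of_all _ fun y => by positivity)
      (Measurable.aestronglyMeasurable (by fun_prop)),
    lintegral_bubble hγ hγd x, ENNReal.toReal_ofReal (by positivity)]

end InnerProductSpace

theorem stmt_10_general (n : ℕ) (γ : ℝ) (hγ0 : 0 < γ) (hγ : 2 * γ < n)
    (x : EuclideanSpace ℝ (Fin n)) :
    ∫ y : EuclideanSpace ℝ (Fin n),
        (1 / ‖x - y‖ ^ (2 * γ)) * (1 / (1 + ‖y‖ ^ 2)) ^ ((n : ℝ) - γ) =
      bubbleI n γ * (1 / (1 + ‖x‖ ^ 2)) ^ γ := by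
  have h := integral_bubble (E := EuclideanSpace ℝ (Fin n)) hγ0
    (by rwa [finrank_euclideanSpace_fin]) x
  rwa [finrank_euclideanSpace_fin] at h

/-- Bubble integral identity: for `0 < γ < n/2`,
`∫ |x-y|^{-2γ} (1+|y|²)^{-(n-γ)} dy = I(γ) (1+|x|²)^{-γ}`. -/
theorem stmt_10 (n : ℕ) (hn : 1 ≤ n) (γ : ℝ) (hγ0 : 0 < γ) (hγ : 2 * γ < n)
    (x : EuclideanSpace ℝ (Fin n)) :
    ∫ y : EuclideanSpace ℝ (Fin n),
        (1 / ‖x - y‖ ^ (2 * γ)) * (1 / (1 + ‖y‖ ^ 2)) ^ ((n : ℝ) - γ) =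
      bubbleI n γ * (1 / (1 + ‖x‖ ^ 2)) ^ γ :=
  stmt_10_general n γ hγ0 hγ x
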